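/- arXiv:1411.3894 — 7 statements merged into one kernel-verified Lean document; each statement's English description precedes it below -/
import Mathlib

section
/- Let V be a finite-dimensional real inner product space, let W be a group of linear isometries of V, let Q be a W-invariant additive subgroup of V, let P∨ be an additive subgroup of V such that ⟨p, q⟩ ∈ ℤ for all p ∈ P∨ and q ∈ Q, and let ρ∨ ∈ V satisfy ρ∨ − w·ρ∨ ∈ P∨ for all w ∈ W. Form the semidirect product Q ⋊ W, where W acts on the additive group Q by restriction of its action on V (this is the group of affine maps a ↦ w·a + q with w ∈ W, q ∈ Q). Then the map θ̂ : Q ⋊ W → ℂˣ sending (q, w) to exp(2πi⟨q, ρ∨⟩) is a group homomorphism; equivalently, for all w_1, w_2 ∈ W and q_1, q_2 ∈ Q one has exp(2πi⟨w_1·q_2 + q_1, ρ∨⟩) = exp(2πi⟨q_1, ρ∨⟩)·exp(2πi⟨q_2, ρ∨⟩). -/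
/-!
Write `e(x) = exp(2πi x)`, a character of `ℝ` trivial on `ℤ`. For an isometry `w`,
`⟪w q, ρ∨⟫ = ⟪q, w⁻¹ ρ∨⟫ = ⟪q, ρ∨⟫ - ⟪ρ∨ - w⁻¹ ρ∨, q⟫`, and the last pairing is an integer
because `ρ∨ - w⁻¹ ρ∨ ∈ P∨` and `q ∈ Q`. Hence `e⟪w q, ρ∨⟫ = e⟪q, ρ∨⟫`, and additivity of
`q ↦ e⟪q, ρ∨⟫` gives the multiplicativity.
-/

open Complex

theorem LinearIsometryEquiv.real_inner_map_left_eq_sub {V : Type*} [NormedAddCommGroup V]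
    [InnerProductSpace ℝ V] (w : V ≃ₗᵢ[ℝ] V) (q ρ : V) :
    inner ℝ (w q) ρ = inner ℝ q ρ - inner ℝ (ρ - w.symm ρ) q := by
  rw [w.inner_map_eq_flip, inner_sub_left, real_inner_comm q ρ, real_inner_comm q]
  ring

theorem Complex.exp_two_pi_mul_I_mul_sub_intCast (x : ℝ) (m : ℤ) :
    exp (2 * Real.pi * I * ((x - m : ℝ) : ℂ)) = exp (2 * Real.pi * I * (x : ℂ)) := by
  rw [ofReal_sub, ofReal_intCast, mul_sub, exp_sub, mul_comm _ (m : ℂ),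
    exp_int_mul_two_pi_mul_I, div_one]

theorem stmt_4_general {V : Type*} [NormedAddCommGroup V] [InnerProductSpace ℝ V]
    (W : Subgroup (V ≃ₗᵢ[ℝ] V)) (Q Pv : AddSubgroup V)
    (hdual : ∀ p ∈ Pv, ∀ q ∈ Q, ∃ m : ℤ, (inner ℝ p q : ℝ) = m)
    (ρv : V) (hρv : ∀ w : W, ρv - (w : V ≃ₗᵢ[ℝ] V) ρv ∈ Pv) :
    ∀ w₁ w₂ : W, ∀ q₁ ∈ Q, ∀ q₂ ∈ Q,
      Complex.exp (2 * Real.pi * Complex.I *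
          ((inner ℝ ((w₁ : V ≃ₗᵢ[ℝ] V) q₂ + q₁) ρv : ℝ) : ℂ)) =
        Complex.exp (2 * Real.pi * Complex.I * ((inner ℝ q₁ ρv : ℝ) : ℂ)) *
          Complex.exp (2 * Real.pi * Complex.I * ((inner ℝ q₂ ρv : ℝ) : ℂ)) := by
  intro w₁ _ q₁ _ q₂ hq₂
  obtain ⟨m, hm⟩ := hdual _ (hρv w₁⁻¹) q₂ hq₂
  rw [Subgroup.coe_inv, LinearIsometryEquiv.inv_def] at hm
  rw [inner_add_left, ofReal_add, mul_add, exp_add,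
    LinearIsometryEquiv.real_inner_map_left_eq_sub, hm, exp_two_pi_mul_I_mul_sub_intCast, mul_comm]

/-- With `W`, `Q`, `P∨`, `ρ∨` as in Statement 3 (Q `W`-invariant, `P∨`
ℤ-dual to `Q`, `ρ∨` admissible), the map `θ̂ : Q ⋊ W → ℂˣ`, `(q, w) ↦ exp(2πi⟪q, ρ∨⟫)`
is a group homomorphism; equivalently, for all `w₁, w₂ ∈ W` and `q₁, q₂ ∈ Q`,
`exp(2πi⟪w₁ q₂ + q₁, ρ∨⟫) = exp(2πi⟪q₁, ρ∨⟫) · exp(2πi⟪q₂, ρ∨⟫)`. -/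
theorem stmt_4 {V : Type*} [NormedAddCommGroup V] [InnerProductSpace ℝ V]
    [FiniteDimensional ℝ V]
    (W : Subgroup (V ≃ₗᵢ[ℝ] V)) (Q Pv : AddSubgroup V)
    (hQ : ∀ w : W, ∀ q ∈ Q, (w : V ≃ₗᵢ[ℝ] V) q ∈ Q)
    (hdual : ∀ p ∈ Pv, ∀ q ∈ Q, ∃ m : ℤ, (inner ℝ p q : ℝ) = m)
    (ρv : V) (hρv : ∀ w : W, ρv - (w : V ≃ₗᵢ[ℝ] V) ρv ∈ Pv) :
    ∀ w₁ w₂ : W, ∀ q₁ ∈ Q, ∀ q₂ ∈ Q,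
      Complex.exp (2 * Real.pi * Complex.I *
          ((inner ℝ ((w₁ : V ≃ₗᵢ[ℝ] V) q₂ + q₁) ρv : ℝ) : ℂ)) =
        Complex.exp (2 * Real.pi * Complex.I * ((inner ℝ q₁ ρv : ℝ) : ℂ)) *
          Complex.exp (2 * Real.pi * Complex.I * ((inner ℝ q₂ ρv : ℝ) : ℂ)) :=
  stmt_4_general W Q Pv hdual ρv hρv
end

section
/- Let V be a finite-dimensional real inner product space, W a finite group of linear isometries of V, and σ : W → {+1, −1} a group homomorphism; for b ∈ V define the orbit function φ^σ_b : V → ℂ by φ^σ_b(a) = Σ_{w ∈ W} σ(w)·exp(2πi⟨w·b, a⟩). Let Q∨ be a W-invariant additive subgroup of V, let P be an additive subgroup of V with ⟨λ, q⟩ ∈ ℤ for all λ ∈ P and q ∈ Q∨, and let ρ ∈ V satisfy ρ − w·ρ ∈ P for all w ∈ W. Then for every b ∈ ρ + P, every w' ∈ W, every q ∈ Q∨ and every a ∈ V, φ^σ_b(w'·a + q) = σ(w')·exp(2πi⟨ρ, q⟩)·φ^σ_b(a). -/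
/-!
Substituting `w ↦ w' w` in the orbit sum shows `φ^σ_b(w' a) = σ(w') φ^σ_b(a)`, since each
`w'` is an isometry and `σ` is multiplicative. Translation by `q ∈ Q∨` multiplies the term of
`w` by `exp(2πi⟪w b, q⟫)`, and this phase does not depend on `w`: writing
`w b - ρ = w (b - ρ) - (ρ - w ρ)`, the number `⟪w b, q⟫ - ⟪ρ, q⟫` is
`⟪b - ρ, w⁻¹ q⟫ - ⟪ρ - w ρ, q⟫`, a difference of two integers.
-/

/-- The orbit function `φ^σ_b(a) = Σ_{w ∈ W} σ(w) · exp(2πi⟪w b, a⟫)` attached to a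
finite group `W` of linear isometries and a sign homomorphism `σ : W → {±1}`. -/
noncomputable def orbitFn {V : Type*} [NormedAddCommGroup V] [InnerProductSpace ℝ V]
    (W : Subgroup (V ≃ₗᵢ[ℝ] V)) [Fintype W] (σ : W →* ℤˣ) (b a : V) : ℂ :=
  ∑ w : W, ((σ w : ℤ) : ℂ) *
    Complex.exp (2 * Real.pi * Complex.I * ((inner ℝ ((w : V ≃ₗᵢ[ℝ] V) b) a : ℝ) : ℂ))

open Complex
open scoped Real

lemma exp_two_pi_I_mul_ofReal_eq_of_sub_eq_int {x y : ℝ} {m : ℤ} (h : x - y = m) :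
    cexp (2 * π * I * x) = cexp (2 * π * I * y) := by
  rw [show x = m + y by linarith]
  push_cast
  rw [mul_add, exp_add, mul_comm (2 * π * I), exp_int_mul_two_pi_mul_I, one_mul]

section

variable {V : Type*} [NormedAddCommGroup V] [InnerProductSpace ℝ V]

lemma exists_int_inner_apply_sub_inner (Qv P : AddSubgroup V)
    (hdual : ∀ l ∈ P, ∀ q ∈ Qv, ∃ m : ℤ, (inner ℝ l q : ℝ) = m)
    (e : V ≃ₗᵢ[ℝ] V) {ρ b q : V} (hρ : ρ - e ρ ∈ P) (hb : b - ρ ∈ P)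
    (hq : q ∈ Qv) (hq' : e.symm q ∈ Qv) :
    ∃ m : ℤ, (inner ℝ (e b) q : ℝ) - inner ℝ ρ q = m := by
  obtain ⟨m₁, hm₁⟩ := hdual _ hb _ hq'
  obtain ⟨m₂, hm₂⟩ := hdual _ hρ _ hq
  refine ⟨m₁ - m₂, ?_⟩
  rw [← LinearIsometryEquiv.inner_map_eq_flip, map_sub, inner_sub_left] at hm₁
  rw [inner_sub_left] at hm₂
  push_cast
  linarith

variable (W : Subgroup (V ≃ₗᵢ[ℝ] V)) [Fintype W] (σ : W →* ℤˣ)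

lemma orbitFn_map (b a : V) (w' : W) :
    orbitFn W σ b ((w' : V ≃ₗᵢ[ℝ] V) a) = ((σ w' : ℤ) : ℂ) * orbitFn W σ b a := by
  unfold orbitFn
  rw [Finset.mul_sum, ← Equiv.sum_comp (Equiv.mulLeft w')]
  refine Finset.sum_congr rfl fun w _ => ?_
  have hinner : (inner ℝ (((w' * w : W) : V ≃ₗᵢ[ℝ] V) b) ((w' : V ≃ₗᵢ[ℝ] V) a) : ℝ) =
      inner ℝ ((w : V ≃ₗᵢ[ℝ] V) b) a :=
    (w' : V ≃ₗᵢ[ℝ] V).inner_map_map _ _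
  simp only [Equiv.coe_mulLeft, hinner, map_mul, Units.val_mul, Int.cast_mul, mul_assoc]

lemma orbitFn_add_of_exp_inner_eq (b a q : V) (c : ℂ)
    (hc : ∀ w : W, cexp (2 * π * I * (inner ℝ ((w : V ≃ₗᵢ[ℝ] V) b) q : ℝ)) = c) :
    orbitFn W σ b (a + q) = c * orbitFn W σ b a := by
  unfold orbitFn
  rw [Finset.mul_sum]
  refine Finset.sum_congr rfl fun w _ => ?_
  rw [inner_add_right, ofReal_add, mul_add, exp_add, hc]
  ring

end

theorem stmt_7_general {V : Type*} [NormedAddCommGroup V] [InnerProductSpace ℝ V]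
    (W : Subgroup (V ≃ₗᵢ[ℝ] V)) [Fintype W] (σ : W →* ℤˣ)
    (Qv P : AddSubgroup V)
    (hQv : ∀ w : W, ∀ q ∈ Qv, (w : V ≃ₗᵢ[ℝ] V) q ∈ Qv)
    (hdual : ∀ l ∈ P, ∀ q ∈ Qv, ∃ m : ℤ, (inner ℝ l q : ℝ) = m)
    (ρ : V) (hρ : ∀ w : W, ρ - (w : V ≃ₗᵢ[ℝ] V) ρ ∈ P)
    (b : V) (hb : b - ρ ∈ P) (w' : W) (q : V) (hq : q ∈ Qv) (a : V) :
    orbitFn W σ b ((w' : V ≃ₗᵢ[ℝ] V) a + q) =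
      ((σ w' : ℤ) : ℂ) * Complex.exp (2 * Real.pi * Complex.I * ((inner ℝ ρ q : ℝ) : ℂ)) *
        orbitFn W σ b a := by
  have hphase (w : W) : cexp (2 * π * I * (inner ℝ ((w : V ≃ₗᵢ[ℝ] V) b) q : ℝ)) =
      cexp (2 * π * I * (inner ℝ ρ q : ℝ)) := by
    have hq' : (w : V ≃ₗᵢ[ℝ] V).symm q ∈ Qv := by
      simpa [← LinearIsometryEquiv.coe_inv] using hQv w⁻¹ q hq
    obtain ⟨m, hm⟩ := exists_int_inner_apply_sub_inner Qv P hdual _ (hρ w) hb hq hq'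
    exact exp_two_pi_I_mul_ofReal_eq_of_sub_eq_int hm
  rw [orbitFn_add_of_exp_inner_eq W σ b _ q _ hphase, orbitFn_map]
  ring

/-- With `Q∨` a `W`-invariant additive subgroup, `P` an additive subgroup
ℤ-dual to `Q∨`, and `ρ` an admissible dual shift, for every `b ∈ ρ + P`, `w' ∈ W`,
`q ∈ Q∨` and `a ∈ V`:
`φ^σ_b(w'·a + q) = σ(w') · exp(2πi⟪ρ, q⟫) · φ^σ_b(a)`. -/
theorem stmt_7 {V : Type*} [NormedAddCommGroup V] [InnerProductSpace ℝ V]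
    [FiniteDimensional ℝ V]
    (W : Subgroup (V ≃ₗᵢ[ℝ] V)) [Fintype W] (σ : W →* ℤˣ)
    (Qv P : AddSubgroup V)
    (hQv : ∀ w : W, ∀ q ∈ Qv, (w : V ≃ₗᵢ[ℝ] V) q ∈ Qv)
    (hdual : ∀ l ∈ P, ∀ q ∈ Qv, ∃ m : ℤ, (inner ℝ l q : ℝ) = m)
    (ρ : V) (hρ : ∀ w : W, ρ - (w : V ≃ₗᵢ[ℝ] V) ρ ∈ P)
    (b : V) (hb : b - ρ ∈ P) (w' : W) (q : V) (hq : q ∈ Qv) (a : V) :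
    orbitFn W σ b ((w' : V ≃ₗᵢ[ℝ] V) a + q) =
      ((σ w' : ℤ) : ℂ) * Complex.exp (2 * Real.pi * Complex.I * ((inner ℝ ρ q : ℝ) : ℂ)) *
        orbitFn W σ b a :=
  stmt_7_general W σ Qv P hQv hdual ρ hρ b hb w' q hq a
end

section
/- Let V be a finite-dimensional real inner product space, W a finite group of linear isometries of V, and σ : W → {+1, −1} a group homomorphism; for b ∈ V define the orbit function φ^σ_b : V → ℂ by φ^σ_b(a) = Σ_{w ∈ W} σ(w)·exp(2πi⟨w·b, a⟩). Let Q∨ be a W-invariant additive subgroup of V, let P be an additive subgroup of V with ⟨λ, q⟩ ∈ ℤ for all λ ∈ P and q ∈ Q∨, and let ρ ∈ V satisfy ρ − w·ρ ∈ P for all w ∈ W. If b ∈ ρ + P and a ∈ V is such that there exist r ∈ W and q ∈ Q∨ with r·a + q = a and σ(r)·exp(2πi⟨ρ, q⟩) = −1, then φ^σ_b(a) = 0. -/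
open Complex

lemma exp_two_pi_I_mul_add_int (x : ℝ) (m : ℤ) :
    exp (2 * Real.pi * I * ((x + m : ℝ) : ℂ)) = exp (2 * Real.pi * I * (x : ℂ)) := by
  push_cast
  rw [mul_add, exp_add, mul_comm _ (m : ℂ), exp_int_mul_two_pi_mul_I, mul_one]

lemma exists_int_inner_isometry_eq_add {V : Type*} [NormedAddCommGroup V]
    [InnerProductSpace ℝ V] {W : Subgroup (V ≃ₗᵢ[ℝ] V)} (Qv P : AddSubgroup V)
    (hQv : ∀ w : W, ∀ q ∈ Qv, (w : V ≃ₗᵢ[ℝ] V) q ∈ Qv)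
    (hdual : ∀ l ∈ P, ∀ q ∈ Qv, ∃ m : ℤ, (inner ℝ l q : ℝ) = m)
    (ρ : V) (hρ : ∀ w : W, ρ - (w : V ≃ₗᵢ[ℝ] V) ρ ∈ P)
    {b : V} (hb : b - ρ ∈ P) {q : V} (hq : q ∈ Qv) (w : W) :
    ∃ m : ℤ, inner ℝ ((w : V ≃ₗᵢ[ℝ] V) b) q = inner ℝ ρ q + m := by
  obtain ⟨m₁, hm₁⟩ := hdual _ hb _ (hQv w⁻¹ q hq)
  obtain ⟨m₂, hm₂⟩ := hdual _ (hρ w) q hq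
  refine ⟨m₁ - m₂, ?_⟩
  have hpull : inner ℝ ((w : V ≃ₗᵢ[ℝ] V) (b - ρ)) q
      = inner ℝ (b - ρ) (((w⁻¹ : W) : V ≃ₗᵢ[ℝ] V) q) :=
    (w : V ≃ₗᵢ[ℝ] V).inner_map_eq_flip _ _
  have hsplit : inner ℝ ((w : V ≃ₗᵢ[ℝ] V) b) q
      = inner ℝ ((w : V ≃ₗᵢ[ℝ] V) (b - ρ)) q - inner ℝ (ρ - (w : V ≃ₗᵢ[ℝ] V) ρ) q
        + inner ℝ ρ q := by
    simp only [map_sub, inner_sub_left]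
    ring
  rw [hsplit, hpull, hm₁, hm₂]
  push_cast
  ring

section OrbitFn

variable {V : Type*} [NormedAddCommGroup V] [InnerProductSpace ℝ V]
  (W : Subgroup (V ≃ₗᵢ[ℝ] V)) [Fintype W] (σ : W →* ℤˣ)

lemma orbitFn_apply_isometry (b a : V) (r : W) :
    orbitFn W σ b ((r : V ≃ₗᵢ[ℝ] V) a) = ((σ r : ℤ) : ℂ) * orbitFn W σ b a := by
  rw [orbitFn, orbitFn, Finset.mul_sum]
  refine Fintype.sum_equiv (Equiv.mulLeft r⁻¹) _ _ fun w => ?_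
  have hinner : inner ℝ ((w : V ≃ₗᵢ[ℝ] V) b) ((r : V ≃ₗᵢ[ℝ] V) a)
      = inner ℝ (((r⁻¹ * w : W) : V ≃ₗᵢ[ℝ] V) b) a :=
    ((r : V ≃ₗᵢ[ℝ] V).symm.inner_map_eq_flip _ _).symm
  have hσ : ((σ w : ℤ) : ℂ) = ((σ r : ℤ) : ℂ) * ((σ (r⁻¹ * w) : ℤ) : ℂ) := by
    rw [← Int.cast_mul, ← Units.val_mul, ← map_mul, mul_inv_cancel_left]
  rw [Equiv.coe_mulLeft, hinner, hσ, mul_assoc]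

lemma orbitFn_add_of_forall_inner_eq_add_int (b a q : V) (c : ℝ)
    (h : ∀ w : W, ∃ m : ℤ, inner ℝ ((w : V ≃ₗᵢ[ℝ] V) b) q = c + m) :
    orbitFn W σ b (a + q) = exp (2 * Real.pi * I * (c : ℂ)) * orbitFn W σ b a := by
  rw [orbitFn, orbitFn, Finset.mul_sum]
  refine Finset.sum_congr rfl fun w _ => ?_
  obtain ⟨m, hm⟩ := h w
  rw [inner_add_right, hm, ← add_assoc, exp_two_pi_I_mul_add_int, ofReal_add, mul_add, exp_add]
  ring

end OrbitFn

theorem stmt_8_general {V : Type*} [NormedAddCommGroup V] [InnerProductSpace ℝ V]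
    (W : Subgroup (V ≃ₗᵢ[ℝ] V)) [Fintype W] (σ : W →* ℤˣ)
    (Qv P : AddSubgroup V)
    (hQv : ∀ w : W, ∀ q ∈ Qv, (w : V ≃ₗᵢ[ℝ] V) q ∈ Qv)
    (hdual : ∀ l ∈ P, ∀ q ∈ Qv, ∃ m : ℤ, (inner ℝ l q : ℝ) = m)
    (ρ : V) (hρ : ∀ w : W, ρ - (w : V ≃ₗᵢ[ℝ] V) ρ ∈ P)
    (b : V) (hb : b - ρ ∈ P) (a : V)
    (ha : ∃ r : W, ∃ q ∈ Qv, (r : V ≃ₗᵢ[ℝ] V) a + q = a ∧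
      ((σ r : ℤ) : ℂ) * Complex.exp (2 * Real.pi * Complex.I * ((inner ℝ ρ q : ℝ) : ℂ))
        = -1) :
    orbitFn W σ b a = 0 := by
  obtain ⟨r, q, hq, hfix, hsign⟩ := ha
  have hshift := exists_int_inner_isometry_eq_add Qv P hQv hdual ρ hρ hb hq
  refine CharZero.eq_neg_self_iff.mp ?_
  calc orbitFn W σ b a = orbitFn W σ b ((r : V ≃ₗᵢ[ℝ] V) a + q) := by rw [hfix]
    _ = ((σ r : ℤ) : ℂ) * exp (2 * Real.pi * I * ((inner ℝ ρ q : ℝ) : ℂ)) * orbitFn W σ b a := by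
      rw [orbitFn_add_of_forall_inner_eq_add_int W σ _ _ _ _ hshift, orbitFn_apply_isometry]
      ring
    _ = -orbitFn W σ b a := by rw [hsign, neg_one_mul]

/-- With `Q∨` a `W`-invariant additive subgroup, `P` ℤ-dual to `Q∨` and
`ρ` an admissible dual shift, if `b ∈ ρ + P` and `a` is fixed by some affine map
`x ↦ r·x + q` (`r ∈ W`, `q ∈ Q∨`) with `σ(r)·exp(2πi⟪ρ, q⟫) = -1`, then
`φ^σ_b(a) = 0`. -/
theorem stmt_8 {V : Type*} [NormedAddCommGroup V] [InnerProductSpace ℝ V]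
    [FiniteDimensional ℝ V]
    (W : Subgroup (V ≃ₗᵢ[ℝ] V)) [Fintype W] (σ : W →* ℤˣ)
    (Qv P : AddSubgroup V)
    (hQv : ∀ w : W, ∀ q ∈ Qv, (w : V ≃ₗᵢ[ℝ] V) q ∈ Qv)
    (hdual : ∀ l ∈ P, ∀ q ∈ Qv, ∃ m : ℤ, (inner ℝ l q : ℝ) = m)
    (ρ : V) (hρ : ∀ w : W, ρ - (w : V ≃ₗᵢ[ℝ] V) ρ ∈ P)
    (b : V) (hb : b - ρ ∈ P) (a : V)
    (ha : ∃ r : W, ∃ q ∈ Qv, (r : V ≃ₗᵢ[ℝ] V) a + q = a ∧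
      ((σ r : ℤ) : ℂ) * Complex.exp (2 * Real.pi * Complex.I * ((inner ℝ ρ q : ℝ) : ℂ))
        = -1) :
    orbitFn W σ b a = 0 :=
  stmt_8_general W σ Qv P hQv hdual ρ hρ b hb a ha
end

section
/- Let V be a finite-dimensional real inner product space, W a finite group of linear isometries of V, and σ : W → {+1, −1} a group homomorphism; for b ∈ V define the orbit function φ^σ_b : V → ℂ by φ^σ_b(a) = Σ_{w ∈ W} σ(w)·exp(2πi⟨w·b, a⟩). Let Q be a W-invariant additive subgroup of V, let P∨ be an additive subgroup of V with ⟨p, q⟩ ∈ ℤ for all p ∈ P∨ and q ∈ Q, let ρ∨ ∈ V satisfy ρ∨ − w·ρ∨ ∈ P∨ for all w ∈ W, and let M be a positive integer. If b ∈ V is such that there exist r ∈ W and q ∈ Q with r·b + M·q = b and σ(r)·exp(2πi⟨q, ρ∨⟩) = −1, then φ^σ_b(a) = 0 for every a ∈ V with M·a − ρ∨ ∈ P∨. -/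
open Complex RealInnerProductSpace

theorem Fintype.sum_eq_zero_of_mul_right_eq_neg {G M : Type*} [Group G] [Fintype G]
    [AddCommGroup M] [IsAddTorsionFree M] {f : G → M} (r : G) (hf : ∀ g, f (g * r) = -f g) :
    ∑ g, f g = 0 :=
  self_eq_neg.mp <| calc
    ∑ g, f g = ∑ g, f (g * r) := (Equiv.sum_comp (Equiv.mulRight r) f).symm
    _ = -∑ g, f g := by simp only [hf, Finset.sum_neg_distrib]

theorem cexp_two_pi_I_mul_add_intCast (x : ℝ) (m : ℤ) :
    exp (2 * Real.pi * I * ↑(x + m)) = exp (2 * Real.pi * I * x) :=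
  exp_eq_exp_iff_exists_int.mpr ⟨m, by push_cast; ring⟩

section Grid

variable {V : Type*} [NormedAddCommGroup V] [InnerProductSpace ℝ V] {Q P : AddSubgroup V}

theorem exists_int_inner_smul_eq_inner_add (hdual : ∀ p ∈ P, ∀ q ∈ Q, ∃ m : ℤ, ⟪p, q⟫ = m)
    (w : V ≃ₗᵢ[ℝ] V) {q ρ a : V} (hq : q ∈ Q) (hwq : w q ∈ Q) (hρ : ρ - w.symm ρ ∈ P)
    {c : ℝ} (ha : c • a - ρ ∈ P) : ∃ m : ℤ, ⟪w q, c • a⟫ = ⟪q, ρ⟫ + m := by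
  obtain ⟨m₁, hm₁⟩ := hdual _ ha _ hwq
  obtain ⟨m₂, hm₂⟩ := hdual _ hρ _ hq
  refine ⟨m₁ - m₂, ?_⟩
  have hshift : ⟪w q, ρ⟫ = ⟪q, ρ⟫ - ⟪ρ - w.symm ρ, q⟫ := by
    rw [w.inner_map_eq_flip, inner_sub_left, real_inner_comm ρ q, real_inner_comm _ q]; ring
  calc ⟪w q, c • a⟫ = ⟪c • a - ρ, w q⟫ + ⟪w q, ρ⟫ := by
        rw [← real_inner_comm (w q) (c • a), inner_sub_left, real_inner_comm (w q) ρ]; ring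
    _ = ⟪q, ρ⟫ + ↑(m₁ - m₂) := by rw [hshift, hm₁, hm₂]; push_cast; ring

theorem cexp_inner_smul_eq_cexp_inner (hdual : ∀ p ∈ P, ∀ q ∈ Q, ∃ m : ℤ, ⟪p, q⟫ = m)
    (w : V ≃ₗᵢ[ℝ] V) {q ρ a : V} (hq : q ∈ Q) (hwq : w q ∈ Q) (hρ : ρ - w.symm ρ ∈ P)
    {c : ℝ} (ha : c • a - ρ ∈ P) :
    exp (2 * Real.pi * I * ⟪w q, c • a⟫) = exp (2 * Real.pi * I * ⟪q, ρ⟫) := by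
  obtain ⟨m, hm⟩ := exists_int_inner_smul_eq_inner_add hdual w hq hwq hρ ha
  rw [hm, cexp_two_pi_I_mul_add_intCast]

end Grid

theorem stmt_10_general {V : Type*} [NormedAddCommGroup V] [InnerProductSpace ℝ V]
    (W : Subgroup (V ≃ₗᵢ[ℝ] V)) [Fintype W] (σ : W →* ℤˣ)
    (Q Pv : AddSubgroup V)
    (hQ : ∀ w : W, ∀ q ∈ Q, (w : V ≃ₗᵢ[ℝ] V) q ∈ Q)
    (hdual : ∀ p ∈ Pv, ∀ q ∈ Q, ∃ m : ℤ, (inner ℝ p q : ℝ) = m)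
    (ρv : V) (hρv : ∀ w : W, ρv - (w : V ≃ₗᵢ[ℝ] V) ρv ∈ Pv)
    (M : ℕ)
    (b : V)
    (hb : ∃ r : W, ∃ q ∈ Q, (r : V ≃ₗᵢ[ℝ] V) b + (M : ℝ) • q = b ∧
      ((σ r : ℤ) : ℂ) * Complex.exp (2 * Real.pi * Complex.I * ((inner ℝ q ρv : ℝ) : ℂ))
        = -1) :
    ∀ a : V, (M : ℝ) • a - ρv ∈ Pv → orbitFn W σ b a = 0 := by
  intro a ha
  obtain ⟨r, q, hq, hrb, hσ⟩ := hb
  have hsq : ((σ r : ℤ) : ℂ) * (σ r : ℤ) = 1 := by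
    rw [← Int.cast_mul, ← Units.val_mul, Int.units_mul_self, Units.val_one, Int.cast_one]
  have hinv : -((σ r : ℤ) : ℂ) = (exp (2 * Real.pi * I * ⟪q, ρv⟫))⁻¹ :=
    eq_inv_of_mul_eq_one_left (by rw [neg_mul, hσ, neg_neg])
  refine Fintype.sum_eq_zero_of_mul_right_eq_neg r fun w => ?_
  have hwr : ((w * r : W) : V ≃ₗᵢ[ℝ] V) b =
      (w : V ≃ₗᵢ[ℝ] V) b - (M : ℝ) • (w : V ≃ₗᵢ[ℝ] V) q := by
    rw [Subgroup.coe_mul, LinearIsometryEquiv.coe_mul, Function.comp_apply,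
      eq_sub_of_add_eq hrb, map_sub, map_smul]
  have hshift := cexp_inner_smul_eq_cexp_inner hdual (w : V ≃ₗᵢ[ℝ] V) hq (hQ w q hq)
    (by simpa using hρv w⁻¹) ha
  rw [hwr, inner_sub_left, real_inner_smul_left, ← real_inner_smul_right, map_mul,
    Units.val_mul, Int.cast_mul, ofReal_sub, mul_sub, exp_sub, hshift, div_eq_mul_inv, ← hinv]
  linear_combination (-((σ w : ℤ) : ℂ) * exp (2 * Real.pi * I * ⟪(w : V ≃ₗᵢ[ℝ] V) b, a⟫)) * hsq

/-- With `Q` a `W`-invariant additive subgroup, `P∨` ℤ-dual to `Q`,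
`ρ∨` an admissible shift and `M ≥ 1`, if the label `b` is fixed by a rescaled dual
affine map, `r·b + M·q = b` with `σ(r)·exp(2πi⟪q, ρ∨⟫) = -1`, then `φ^σ_b(a) = 0`
for every grid point `a` (`M·a - ρ∨ ∈ P∨`). -/
theorem stmt_10 {V : Type*} [NormedAddCommGroup V] [InnerProductSpace ℝ V]
    [FiniteDimensional ℝ V]
    (W : Subgroup (V ≃ₗᵢ[ℝ] V)) [Fintype W] (σ : W →* ℤˣ)
    (Q Pv : AddSubgroup V)
    (hQ : ∀ w : W, ∀ q ∈ Q, (w : V ≃ₗᵢ[ℝ] V) q ∈ Q)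
    (hdual : ∀ p ∈ Pv, ∀ q ∈ Q, ∃ m : ℤ, (inner ℝ p q : ℝ) = m)
    (ρv : V) (hρv : ∀ w : W, ρv - (w : V ≃ₗᵢ[ℝ] V) ρv ∈ Pv)
    (M : ℕ) (hM : 0 < M)
    (b : V)
    (hb : ∃ r : W, ∃ q ∈ Q, (r : V ≃ₗᵢ[ℝ] V) b + (M : ℝ) • q = b ∧
      ((σ r : ℤ) : ℂ) * Complex.exp (2 * Real.pi * Complex.I * ((inner ℝ q ρv : ℝ) : ℂ))
        = -1) :
    ∀ a : V, (M : ℝ) • a - ρv ∈ Pv → orbitFn W σ b a = 0 :=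
  stmt_10_general W σ Q Pv hQ hdual ρv hρv M b hb
end

section
/- Let n ≥ 2 and M ≥ 0 be integers, and let N be the number of (n+1)-tuples (u_0, u_1, …, u_n) of integers with u_0 ≥ 1, u_1 ≥ 1, …, u_{n−1} ≥ 1, u_n ≥ 0 and u_0 + 2u_1 + 2u_2 + ⋯ + 2u_{n−1} + u_n = M. Then: if M − (2n−1) = 2k for an integer k ≥ 0, then N = C(n+k, n) + C(n+k−1, n); if M − (2n−1) = 2k+1 for an integer k ≥ 0, then N = 2·C(n+k, n); and if M < 2n−1, then N = 0. -/
/-! Put `u_i = x_i + 1` for `i < n` and `u_n = x_n`: the grid becomes the set of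
`x ∈ ℕ^{n+1}` with `x_0 + 2 (x_1 + ⋯ + x_{n-1}) + x_n = m`, where `M = m + (2n - 1)`.
Writing the two end coordinates as `x_0 = 2a + α`, `x_n = 2b + β` with `α, β ∈ {0, 1}`, the
equation becomes `a + x_1 + ⋯ + x_{n-1} + b = (m - α - β) / 2`, an equation in `n + 1` unknowns
with coefficients one, which has `C(n + k, n)` solutions with right-hand side `k` (stars and
bars). For `m = 2k + 1` the parities `(α, β) = (0, 1), (1, 0)` contribute `C(n + k, n)` each;
for `m = 2k` the parities `(0, 0)` and `(1, 1)` contribute `C(n + k, n)` and `C(n + k - 1, n)`. -/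

section

variable {α : Type*} {j : ℕ}

def ofTriple : α × (Fin j → α) × α ≃ (Fin (j + 1 + 1) → α) :=
  ((Equiv.refl α).prodCongr ((Equiv.prodComm _ _).trans (Fin.snocEquiv fun _ => α))).trans
    (Fin.consEquiv fun _ => α)

@[simp] lemma ofTriple_apply (p : α × (Fin j → α) × α) :
    ofTriple p = Fin.cons p.1 (Fin.snoc p.2.1 p.2.2) := rfl

lemma ofTriple_last (p : α × (Fin j → α) × α) : ofTriple p (Fin.last (j + 1)) = p.2.2 := by
  simp [← Fin.succ_last]

lemma forall_lt_ofTriple {P : α → Prop} {p : α × (Fin j → α) × α} :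
    (∀ i : Fin (j + 1 + 1), (i : ℕ) < j + 1 → P (ofTriple p i)) ↔ P p.1 ∧ ∀ i, P (p.2.1 i) := by
  rw [Fin.forall_fin_succ, Fin.forall_fin_succ']
  simp

lemma sum_ofTriple [AddCommMonoid α] (p : α × (Fin j → α) × α) :
    ∑ i, ofTriple p i = p.1 + ∑ i, p.2.1 i + p.2.2 := by
  simp [Fin.sum_cons, Fin.sum_snoc, add_assoc]

lemma sum_mark_mul_ofTriple [Semiring α] (p : α × (Fin j → α) × α) :
    ∑ i : Fin (j + 1 + 1), (if (i : ℕ) = 0 ∨ (i : ℕ) = j + 1 then 1 else 2) * ofTriple p i =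
      p.1 + 2 * ∑ i, p.2.1 i + p.2.2 := by
  rw [Fin.sum_univ_succ, Fin.sum_univ_castSucc]
  simp [Finset.mul_sum, add_assoc, Fin.val_succ, Nat.ne_of_lt]

def tripleSum (p : ℕ × (Fin j → ℕ) × ℕ) : ℕ := p.1 + ∑ i, p.2.1 i + p.2.2

def markSum (p : ℕ × (Fin j → ℕ) × ℕ) : ℕ := p.1 + 2 * ∑ i, p.2.1 i + p.2.2

lemma ncard_sum_eq_choose (n k : ℕ) :
    {x : Fin (n + 1) → ℕ | ∑ i, x i = k}.ncard = (n + k).choose n := by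
  rw [← Nat.card_coe_set_eq]
  calc Nat.card {x : Fin (n + 1) → ℕ // ∑ i, x i = k}
      = Nat.card (Sym (Fin (n + 1)) k) := Nat.card_congr (Sym.equivNatSumOfFintype _ _).symm
    _ = (n + k).choose n := by
      rw [Sym.natCard_sym_eq_choose, Nat.card_fin, Nat.add_right_comm, Nat.add_sub_cancel,
        Nat.choose_symm_add]

lemma ncard_tripleSum_eq (j k : ℕ) :
    {p : ℕ × (Fin j → ℕ) × ℕ | tripleSum p = k}.ncard = (j + 1 + k).choose (j + 1) := by
  have : {p : ℕ × (Fin j → ℕ) × ℕ | tripleSum p = k} = ofTriple ⁻¹' {x | ∑ i, x i = k} := by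
    ext p
    simp only [Set.mem_preimage, Set.mem_ofPred_eq, sum_ofTriple, tripleSum]
  rw [this, Set.ncard_preimage_of_injective_subset_range ofTriple.injective
    (by simp [ofTriple.surjective.range_eq]), ncard_sum_eq_choose]

lemma finite_tripleSum_eq (j k : ℕ) : {p : ℕ × (Fin j → ℕ) × ℕ | tripleSum p = k}.Finite :=
  Set.finite_of_ncard_pos (by rw [ncard_tripleSum_eq]; exact Nat.choose_pos (by omega))

lemma ncard_tripleSum_add_one_eq (j k : ℕ) :
    {p : ℕ × (Fin j → ℕ) × ℕ | tripleSum p + 1 = k}.ncard = (j + k).choose (j + 1) := by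
  cases k with
  | zero => simp
  | succ k =>
    simp only [add_left_inj, ncard_tripleSum_eq, ← Nat.add_assoc, Nat.add_right_comm j k 1]

def doubleEnds (a b : ℕ) (p : ℕ × (Fin j → ℕ) × ℕ) : ℕ × (Fin j → ℕ) × ℕ :=
  (2 * p.1 + a, p.2.1, 2 * p.2.2 + b)

lemma doubleEnds_injective (a b : ℕ) : Function.Injective (doubleEnds (j := j) a b) := by
  rintro ⟨x, w, y⟩ ⟨x', w', y'⟩ h
  simp only [doubleEnds, Prod.mk.injEq] at h
  obtain ⟨hx, rfl, hy⟩ := h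
  simp only [Prod.mk.injEq, true_and]
  omega

lemma mem_image_doubleEnds {a b : ℕ} (ha : a < 2) (hb : b < 2) {S : Set (ℕ × (Fin j → ℕ) × ℕ)}
    {p : ℕ × (Fin j → ℕ) × ℕ} :
    p ∈ doubleEnds a b '' S ↔ p.1 % 2 = a ∧ p.2.2 % 2 = b ∧ (p.1 / 2, p.2.1, p.2.2 / 2) ∈ S := by
  constructor
  · rintro ⟨⟨x, w, y⟩, hq, rfl⟩
    refine ⟨by simp [doubleEnds]; omega, by simp [doubleEnds]; omega, ?_⟩
    convert hq using 2 <;> simp [doubleEnds] <;> omega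
  · rintro ⟨h1, h2, hS⟩
    refine ⟨_, hS, ?_⟩
    obtain ⟨x, w, y⟩ := p
    simp only [doubleEnds, Prod.mk.injEq, true_and] at h1 h2 ⊢
    omega

lemma ncard_union_doubleEnds {b b' : ℕ} (hb : b < 2) (hb' : b' < 2)
    {S T : Set (ℕ × (Fin j → ℕ) × ℕ)} (hS : S.Finite) (hT : T.Finite) :
    (doubleEnds 0 b '' S ∪ doubleEnds 1 b' '' T).ncard = S.ncard + T.ncard := by
  have hdisj : Disjoint (doubleEnds 0 b '' S) (doubleEnds 1 b' '' T) := by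
    rw [Set.disjoint_left]
    intro p hS hT
    rw [mem_image_doubleEnds zero_lt_two hb] at hS
    rw [mem_image_doubleEnds one_lt_two hb'] at hT
    omega
  rw [Set.ncard_union_eq hdisj (hS.image _) (hT.image _),
    Set.ncard_image_of_injective _ (doubleEnds_injective _ _),
    Set.ncard_image_of_injective _ (doubleEnds_injective _ _)]

lemma ncard_markSum_eq_two_mul_add_one (j k : ℕ) :
    {p : ℕ × (Fin j → ℕ) × ℕ | markSum p = 2 * k + 1}.ncard =
      2 * (j + 1 + k).choose (j + 1) := by
  have : {p : ℕ × (Fin j → ℕ) × ℕ | markSum p = 2 * k + 1} =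
      doubleEnds 0 1 '' {p | tripleSum p = k} ∪ doubleEnds 1 0 '' {p | tripleSum p = k} := by
    ext p
    simp only [Set.mem_union, mem_image_doubleEnds (j := j) zero_lt_two one_lt_two,
      mem_image_doubleEnds (j := j) one_lt_two zero_lt_two, Set.mem_ofPred_eq, markSum,
      tripleSum]
    omega
  rw [this, ncard_union_doubleEnds one_lt_two zero_lt_two (finite_tripleSum_eq j k)
    (finite_tripleSum_eq j k), ncard_tripleSum_eq, two_mul]

lemma ncard_markSum_eq_two_mul (j k : ℕ) :
    {p : ℕ × (Fin j → ℕ) × ℕ | markSum p = 2 * k}.ncard =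
      (j + 1 + k).choose (j + 1) + (j + k).choose (j + 1) := by
  -- `tripleSum p + 1 = k` rather than `tripleSum p = k - 1`, which would be wrong for `k = 0`
  have : {p : ℕ × (Fin j → ℕ) × ℕ | markSum p = 2 * k} =
      doubleEnds 0 0 '' {p | tripleSum p = k} ∪ doubleEnds 1 1 '' {p | tripleSum p + 1 = k} := by
    ext p
    simp only [Set.mem_union, mem_image_doubleEnds (j := j) zero_lt_two zero_lt_two,
      mem_image_doubleEnds (j := j) one_lt_two one_lt_two, Set.mem_ofPred_eq, markSum,
      tripleSum]
    omega
  have hfin : {p : ℕ × (Fin j → ℕ) × ℕ | tripleSum p + 1 = k}.Finite :=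
    (finite_tripleSum_eq j (k - 1)).subset fun p (hp : _ = k) => show _ = k - 1 by omega
  rw [this, ncard_union_doubleEnds zero_lt_two one_lt_two (finite_tripleSum_eq j k) hfin,
    ncard_tripleSum_eq, ncard_tripleSum_add_one_eq]

/-- The shifted point grid `F^{σ^s}_M(ρ, 0)` of type `C_n`. -/
def shiftedGrid (n M : ℕ) : Set (Fin (n + 1) → ℤ) :=
  {u | (∀ i : Fin (n + 1), (i : ℕ) < n → 1 ≤ u i) ∧ 0 ≤ u (Fin.last n) ∧
    ∑ i : Fin (n + 1), (if (i : ℕ) = 0 ∨ (i : ℕ) = n then 1 else 2) * u i = (M : ℤ)}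

def shiftedPoint (p : ℕ × (Fin j → ℕ) × ℕ) : Fin (j + 1 + 1) → ℤ :=
  ofTriple ((p.1 : ℤ) + 1, fun i => (p.2.1 i : ℤ) + 1, (p.2.2 : ℤ))

lemma shiftedPoint_injective : Function.Injective (shiftedPoint (j := j)) := by
  rintro ⟨x, w, y⟩ ⟨x', w', y'⟩ h
  simp only [shiftedPoint, ofTriple.apply_eq_iff_eq, Prod.mk.injEq, add_left_inj,
    Nat.cast_inj, funext_iff] at h
  obtain ⟨rfl, hw, rfl⟩ := h
  rw [funext hw]

lemma shiftedPoint_mem_shiftedGrid {p : ℕ × (Fin j → ℕ) × ℕ} {M : ℕ} :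
    shiftedPoint p ∈ shiftedGrid (j + 1) M ↔ markSum p + (2 * j + 1) = M := by
  have hsum : ((p.1 : ℤ) + 1) + 2 * ∑ i, ((p.2.1 i : ℤ) + 1) + p.2.2 =
      ((markSum p + (2 * j + 1) : ℕ) : ℤ) := by
    push_cast [markSum, Finset.sum_add_distrib, Finset.sum_const, Finset.card_univ,
      Fintype.card_fin]
    ring
  simp only [shiftedGrid, shiftedPoint, Set.mem_ofPred_eq, forall_lt_ofTriple, ofTriple_last,
    sum_mark_mul_ofTriple, hsum, Nat.cast_inj]
  exact ⟨fun h => h.2.2, fun h => ⟨⟨by omega, fun i => by omega⟩, by omega, h⟩⟩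

lemma shiftedGrid_subset_range (M : ℕ) :
    shiftedGrid (j + 1) M ⊆ Set.range (shiftedPoint (j := j)) := by
  rintro u ⟨hpos, hlast, -⟩
  obtain ⟨⟨a, v, b⟩, rfl⟩ := ofTriple.surjective u
  rw [forall_lt_ofTriple] at hpos
  rw [ofTriple_last] at hlast
  obtain ⟨x, hx⟩ := Int.eq_ofNat_of_zero_le (sub_nonneg.2 hpos.1)
  choose w hw using fun i => Int.eq_ofNat_of_zero_le (sub_nonneg.2 (hpos.2 i))
  obtain ⟨y, rfl⟩ := Int.eq_ofNat_of_zero_le hlast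
  refine ⟨(x, w, y), ?_⟩
  simp only [shiftedPoint, ← hx, ← hw, sub_add_cancel]

lemma ncard_shiftedGrid (j M : ℕ) :
    (shiftedGrid (j + 1) M).ncard =
      {p : ℕ × (Fin j → ℕ) × ℕ | markSum p + (2 * j + 1) = M}.ncard := by
  rw [← Set.ncard_preimage_of_injective_subset_range shiftedPoint_injective
    (shiftedGrid_subset_range M)]
  congr 1
  ext p
  exact shiftedPoint_mem_shiftedGrid

end

/-- For integers `n ≥ 2`, `M ≥ 0`, let `N` be the number of integer
tuples `(u_0, …, u_n)` with `u_0, …, u_{n-1} ≥ 1`, `u_n ≥ 0` and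
`u_0 + 2u_1 + ⋯ + 2u_{n-1} + u_n = M`.  If `M - (2n-1) = 2k`, `k ≥ 0`, then
`N = C(n+k, n) + C(n+k-1, n)`; if `M - (2n-1) = 2k+1` then `N = 2·C(n+k, n)`;
and if `M < 2n-1` then `N = 0`. -/
theorem stmt_11 (n : ℕ) (hn : 2 ≤ n) (M : ℕ) :
    (∀ k : ℕ, M = 2 * n - 1 + 2 * k →
      {u : Fin (n + 1) → ℤ | (∀ i : Fin (n + 1), (i : ℕ) < n → 1 ≤ u i) ∧
          0 ≤ u (Fin.last n) ∧
          ∑ i : Fin (n + 1),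
            (if (i : ℕ) = 0 ∨ (i : ℕ) = n then 1 else 2) * u i = (M : ℤ)}.ncard =
        (n + k).choose n + (n + k - 1).choose n) ∧
    (∀ k : ℕ, M = 2 * n - 1 + (2 * k + 1) →
      {u : Fin (n + 1) → ℤ | (∀ i : Fin (n + 1), (i : ℕ) < n → 1 ≤ u i) ∧
          0 ≤ u (Fin.last n) ∧
          ∑ i : Fin (n + 1),
            (if (i : ℕ) = 0 ∨ (i : ℕ) = n then 1 else 2) * u i = (M : ℤ)}.ncard =
        2 * (n + k).choose n) ∧
    (M < 2 * n - 1 →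
      {u : Fin (n + 1) → ℤ | (∀ i : Fin (n + 1), (i : ℕ) < n → 1 ≤ u i) ∧
          0 ≤ u (Fin.last n) ∧
          ∑ i : Fin (n + 1),
            (if (i : ℕ) = 0 ∨ (i : ℕ) = n then 1 else 2) * u i = (M : ℤ)}.ncard = 0) := by
  obtain ⟨j, rfl⟩ : ∃ j, n = j + 1 := ⟨n - 1, by omega⟩
  refine ⟨fun k hk => ?_, fun k hk => ?_, fun hM => ?_⟩ <;>
    refine (ncard_shiftedGrid j M).trans ?_
  · obtain rfl : M = 2 * k + (2 * j + 1) := by omega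
    simp only [add_left_inj, ncard_markSum_eq_two_mul, Nat.add_sub_cancel_right,
      Nat.add_right_comm j 1 k]
  · obtain rfl : M = 2 * k + 1 + (2 * j + 1) := by omega
    simp only [add_left_inj, ncard_markSum_eq_two_mul_add_one]
  · convert Set.ncard_empty (ℕ × (Fin j → ℕ) × ℕ)
    ext p
    simp only [Set.mem_ofPred_eq, Set.mem_empty_iff_false, iff_false]
    omega
end

section
/- Let n ≥ 1 and k ≥ 0 be integers. Then the number of (n+1)-tuples (u_0, u_1, …, u_n) of nonnegative integers with u_0 + 2u_1 + 2u_2 + ⋯ + 2u_{n−1} + u_n = 2k equals C(n+k, n) + C(n+k−1, n), and the number of (n+1)-tuples (u_0, u_1, …, u_n) of nonnegative integers with u_0 + 2u_1 + ⋯ + 2u_{n−1} + u_n = 2k+1 equals 2·C(n+k, n). -/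
/-!
Sort the tuples with `u₀ + 2u₁ + ⋯ + 2uₙ₋₁ + uₙ = m` by the parities of the two end coordinates:
writing `u₀ = 2a + b` and `uₙ = 2c + d` with `b, d ∈ {0, 1}`, the tuple `(a, u₁, …, uₙ₋₁, c)` has
plain sum `(m - b - d) / 2`, so by stars and bars each admissible parity class contributes
`C((m - b - d) / 2 + n, n)`. For `m = 2k` the classes `(0, 0)` and `(1, 1)` occur, for `m = 2k + 1`
the two mixed ones. The same works for any set `E` of coordinates of weight `1`, the others having
weight `2`.
-/

open Finset

section

variable {ι : Type*} [Fintype ι]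

theorem finite_setOf_sum_le (m : ℕ) : {v : ι → ℕ | ∑ i, v i ≤ m}.Finite := by
  classical
  refine (Fintype.piFinset fun _ => range (m + 1)).finite_toSet.subset fun v hv => ?_
  rw [mem_coe, Fintype.mem_piFinset]
  exact fun i =>
    mem_range_succ_iff.2 ((single_le_sum (fun _ _ => Nat.zero_le _) (mem_univ i)).trans hv)

theorem ncard_setOf_sum_eq [DecidableEq ι] (j : ℕ) :
    {v : ι → ℕ | ∑ i, v i = j}.ncard = (Fintype.card ι + j - 1).choose j := by
  have : {v : ι → ℕ | ∑ i, v i = j} = ((piAntidiag univ j : Finset (ι → ℕ)) : Set (ι → ℕ)) := by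
    ext; simp
  rw [this, Set.ncard_coe_finset, ← map_sym_eq_piAntidiag, card_map, sym_univ, card_univ,
    Sym.card_sym_eq_choose]

theorem setOf_two_mul_sum_add_eq {c m : ℕ} (j : ℕ) (h : 2 * j + c = m) :
    {v : ι → ℕ | 2 * ∑ i, v i + c = m} = {v | ∑ i, v i = j} := by
  ext v
  simp only [Set.mem_ofPred_eq]
  omega

theorem setOf_two_mul_sum_add_eq_empty {c m : ℕ} (h : ∀ j, 2 * j + c ≠ m) :
    {v : ι → ℕ | 2 * ∑ i, v i + c = m} = ∅ :=
  Set.eq_empty_of_forall_notMem fun v (hv : 2 * ∑ i, v i + c = m) => h _ hv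

theorem ncard_setOf_nonneg_int_eq (w : ι → ℕ) (m : ℕ) :
    {u : ι → ℤ | (∀ i, 0 ≤ u i) ∧ ∑ i, (w i : ℤ) * u i = m}.ncard
      = {v : ι → ℕ | ∑ i, w i * v i = m}.ncard := by
  have : {u : ι → ℤ | (∀ i, 0 ≤ u i) ∧ ∑ i, (w i : ℤ) * u i = m}
      = (fun v i => (v i : ℤ)) '' {v : ι → ℕ | ∑ i, w i * v i = m} := by
    ext u
    constructor
    · rintro ⟨hu, hsum⟩
      refine ⟨fun i => (u i).toNat, ?_, funext fun i => Int.toNat_of_nonneg (hu i)⟩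
      rw [Set.mem_ofPred_eq, ← Nat.cast_inj (R := ℤ), ← hsum]
      push_cast
      exact sum_congr rfl fun i _ => by rw [Int.toNat_of_nonneg (hu i)]
    · rintro ⟨v, hv, rfl⟩
      exact ⟨fun i => Int.natCast_nonneg _, show ∑ i, (w i : ℤ) * v i = m by exact_mod_cast hv⟩
  refine this ▸ Set.ncard_image_of_injective _ fun v v' h => funext fun i => ?_
  exact_mod_cast congrFun h i

end

section

variable {ι : Type*} [DecidableEq ι] {E t : Finset ι}

def liftParity (E t : Finset ι) (v : ι → ℕ) : ι → ℕ :=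
  fun i => if i ∈ E then 2 * v i + if i ∈ t then 1 else 0 else v i

theorem liftParity_injective : Function.Injective (liftParity E t) := by
  intro v v' h
  funext i
  have := congrFun h i
  simp only [liftParity] at this
  split_ifs at this <;> omega

theorem eq_of_liftParity_eq {t' : Finset ι} {v v' : ι → ℕ} (ht : t ⊆ E) (ht' : t' ⊆ E)
    (h : liftParity E t v = liftParity E t' v') : t = t' := by
  ext i
  have := congrFun h i
  simp only [liftParity] at this
  by_cases hi : i ∈ E
  · simp only [hi, if_true] at this
    split_ifs at this <;> grind
  · exact iff_of_false (fun h => hi (ht h)) (fun h => hi (ht' h))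

theorem exists_liftParity (u : ι → ℕ) : ∃ t ⊆ E, ∃ v, liftParity E t v = u := by
  refine ⟨E.filter (fun i => u i % 2 = 1), filter_subset _ _,
    fun i => if i ∈ E then u i / 2 else u i, funext fun i => ?_⟩
  simp only [liftParity, mem_filter]
  split_ifs <;> grind

variable [Fintype ι]

theorem sum_weight_mul_liftParity (ht : t ⊆ E) (v : ι → ℕ) :
    ∑ i, (if i ∈ E then 1 else 2) * liftParity E t v i = 2 * ∑ i, v i + #t := by
  have hterm (i : ι) : (if i ∈ E then 1 else 2) * liftParity E t v i
      = 2 * v i + if i ∈ t then 1 else 0 := by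
    simp only [liftParity]
    by_cases hi : i ∈ E
    · simp [hi]
    · simp [hi, show i ∉ t from fun h => hi (ht h)]
  simp only [hterm, sum_add_distrib, ← mul_sum, sum_boole, filter_mem_eq_inter, univ_inter,
    Nat.cast_id]

theorem setOf_weightedSum_eq_biUnion (m : ℕ) :
    {u : ι → ℕ | ∑ i, (if i ∈ E then 1 else 2) * u i = m}
      = ⋃ t ∈ (E.powerset : Set (Finset ι)), liftParity E t '' {v | 2 * ∑ i, v i + #t = m} := by
  ext u
  simp only [Set.mem_ofPred_eq, Set.mem_iUnion, Set.mem_image, mem_coe, mem_powerset]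
  constructor
  · rintro rfl
    obtain ⟨t, ht, v, rfl⟩ := exists_liftParity (E := E) u
    exact ⟨t, ht, v, (sum_weight_mul_liftParity ht v).symm, rfl⟩
  · rintro ⟨t, ht, v, hv, rfl⟩
    rw [sum_weight_mul_liftParity ht v, hv]

theorem ncard_setOf_weightedSum_eq (m : ℕ) :
    {u : ι → ℕ | ∑ i, (if i ∈ E then 1 else 2) * u i = m}.ncard
      = ∑ c ∈ range (#E + 1), (#E).choose c * {v : ι → ℕ | 2 * ∑ i, v i + c = m}.ncard := by
  rw [setOf_weightedSum_eq_biUnion, Set.Finite.ncard_biUnion E.powerset.finite_toSet,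
    finsum_mem_coe_finset]
  · refine (sum_congr rfl fun t _ => Set.ncard_image_of_injective _ liftParity_injective).trans ?_
    exact sum_powerset_apply_card (fun c => {v : ι → ℕ | 2 * ∑ i, v i + c = m}.ncard)
  · intro t _
    refine ((finite_setOf_sum_le m).subset fun v (hv : _ = m) => ?_).image _
    simp only [Set.mem_ofPred_eq]
    omega
  · intro t ht t' ht' hne
    refine Set.disjoint_left.2 ?_
    rintro _ ⟨v, -, rfl⟩ ⟨v', -, h⟩
    exact hne (eq_of_liftParity_eq (mem_powerset.1 ht') (mem_powerset.1 ht) h).symm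

end

theorem ncard_setOf_endpointWeightedSum_eq {n : ℕ} (hn : 1 ≤ n) (m : ℕ) :
    {u : Fin (n + 1) → ℤ | (∀ i, 0 ≤ u i) ∧
      ∑ i : Fin (n + 1), (if (i : ℕ) = 0 ∨ (i : ℕ) = n then 1 else 2) * u i = m}.ncard
      = ∑ c ∈ range 3, (2).choose c * {v : Fin (n + 1) → ℕ | 2 * ∑ i, v i + c = m}.ncard := by
  have hweight (i : Fin (n + 1)) : (if (i : ℕ) = 0 ∨ (i : ℕ) = n then 1 else 2 : ℤ)
      = ((if i ∈ ({0, Fin.last n} : Finset (Fin (n + 1))) then 1 else 2 : ℕ) : ℤ) := by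
    simp only [mem_insert, mem_singleton, Fin.ext_iff, Fin.val_zero, Fin.val_last]
    split_ifs <;> rfl
  simp_rw [hweight, ncard_setOf_nonneg_int_eq, ncard_setOf_weightedSum_eq,
    card_pair (show (0 : Fin (n + 1)) ≠ Fin.last n by simp [Fin.ext_iff]; omega)]

theorem ncard_setOf_sum_eq_fin (n j : ℕ) :
    {v : Fin (n + 1) → ℕ | ∑ i, v i = j}.ncard = (n + j).choose n := by
  rw [ncard_setOf_sum_eq, Fintype.card_fin, show n + 1 + j - 1 = n + j by omega,
    Nat.choose_symm_add]

/-- For integers `n ≥ 1` and `k ≥ 0`, the number of tuples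
`(u_0, …, u_n)` of nonnegative integers with `u_0 + 2u_1 + ⋯ + 2u_{n-1} + u_n = 2k`
equals `C(n+k, n) + C(n+k-1, n)`, and the number of such tuples with the sum equal
to `2k+1` equals `2·C(n+k, n)`. -/
theorem stmt_14 (n : ℕ) (hn : 1 ≤ n) (k : ℕ) :
    ({u : Fin (n + 1) → ℤ | (∀ i : Fin (n + 1), 0 ≤ u i) ∧
        ∑ i : Fin (n + 1),
          (if (i : ℕ) = 0 ∨ (i : ℕ) = n then 1 else 2) * u i = 2 * (k : ℤ)}.ncard =
      (n + k).choose n + (n + k - 1).choose n) ∧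
    ({u : Fin (n + 1) → ℤ | (∀ i : Fin (n + 1), 0 ≤ u i) ∧
        ∑ i : Fin (n + 1),
          (if (i : ℕ) = 0 ∨ (i : ℕ) = n then 1 else 2) * u i = 2 * (k : ℤ) + 1}.ncard =
      2 * (n + k).choose n) := by
  refine ⟨?_, ?_⟩
  · rw [show 2 * (k : ℤ) = ((2 * k : ℕ) : ℤ) by push_cast; ring,
      ncard_setOf_endpointWeightedSum_eq hn, sum_range_succ, sum_range_succ, sum_range_one,
      setOf_two_mul_sum_add_eq (c := 0) k (by omega),
      setOf_two_mul_sum_add_eq_empty (c := 1) (by omega), ncard_setOf_sum_eq_fin]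
    rcases k with _ | k
    · rw [setOf_two_mul_sum_add_eq_empty (c := 2) (by omega),
        Nat.choose_eq_zero_of_lt (by omega : n + 0 - 1 < n)]
      simp
    · rw [setOf_two_mul_sum_add_eq (c := 2) k (by omega), ncard_setOf_sum_eq_fin,
        show n + (k + 1) - 1 = n + k by omega]
      simp
  · rw [show 2 * (k : ℤ) + 1 = ((2 * k + 1 : ℕ) : ℤ) by push_cast; ring,
      ncard_setOf_endpointWeightedSum_eq hn, sum_range_succ, sum_range_succ, sum_range_one,
      setOf_two_mul_sum_add_eq_empty (c := 0) (by omega),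
      setOf_two_mul_sum_add_eq (c := 1) k (by omega),
      setOf_two_mul_sum_add_eq_empty (c := 2) (by omega), ncard_setOf_sum_eq_fin]
    simp
end

section
/- Let V be a finite-dimensional real inner product space, W a finite group of linear isometries of V, σ : W → {+1, −1} a group homomorphism, and M ≥ 1 an integer; for b ∈ V define φ^σ_b : V → ℂ by φ^σ_b(a) = Σ_{w ∈ W} σ(w)·exp(2πi⟨w·b, a⟩). Let Q∨ ⊆ P∨ be W-invariant additive subgroups of V, let P be an additive subgroup of V with ⟨λ, q⟩ ∈ ℤ for all λ ∈ P and q ∈ Q∨, and set Q = {v ∈ V : ⟨v, p⟩ ∈ ℤ for all p ∈ P∨}. Let ρ ∈ V satisfy ρ − w·ρ ∈ P for all w ∈ W, let ρ∨ ∈ V satisfy ρ∨ − w·ρ∨ ∈ P∨ for all w ∈ W, and let b, b' ∈ ρ + P. Let Y be a finite subset of V such that y ↦ y + Q∨ is a bijection from Y onto the set of cosets {v + Q∨ : v ∈ V, M·v − ρ∨ ∈ P∨}. Then Σ_{y ∈ Y} φ^σ_b(y)·conj(φ^σ_{b'}(y)) = |W|·|Y|·Σ_{w ∈ W, b − w·b'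 ∈ M·Q} σ(w)·exp(2πi⟨b − w·b', ρ∨⟩/M). -/
open scoped Classical

/-!
Write `e(r) = exp(2πi r)`. Expanding both orbit functions turns the left side into a double sum
over `W × W` of grid sums `∑_{y ∈ Y} e(⟪c, y⟫)` with `c = w b - w' b'`. As `c` pairs integrally
with `Q∨`, the summand is a character of `V ⧸ Q∨`, and translating the grid by `p / M`
(`p ∈ P∨`) multiplies it by `e(⟪c, p⟫ / M)`. Hence the grid sum vanishes unless `c ∈ M Q`, where
it equals `|Y| e(⟪c, ρ∨⟫ / M)`. Because `ρ∨` is admissible this weight is `W`-invariant, and the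
substitution `w' = w u` collapses the double sum to `|W|` times a single sum.
-/

open Finset Complex
open scoped RealInnerProductSpace

noncomputable def expChar : AddChar ℝ ℂ where
  toFun r := exp (2 * Real.pi * I * r)
  map_zero_eq_one' := by simp
  map_add_eq_mul' r s := by rw [← Complex.exp_add]; push_cast; ring_nf

namespace expChar

theorem apply (r : ℝ) : expChar r = exp (2 * Real.pi * I * r) := rfl

theorem intCast (n : ℤ) : expChar n = 1 := by
  rw [apply, ← exp_int_mul_two_pi_mul_I n]; push_cast; ring_nf

theorem add_intCast (r : ℝ) (n : ℤ) : expChar (r + n) = expChar r := by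
  rw [AddChar.map_add_eq_mul, intCast, mul_one]

theorem eq_one_iff {r : ℝ} : expChar r = 1 ↔ ∃ n : ℤ, r = n := by
  have h2πI : 2 * (Real.pi : ℂ) * I ≠ 0 := by simp [Real.pi_ne_zero, I_ne_zero]
  rw [apply, exp_eq_one_iff]
  refine exists_congr fun n => ⟨fun h => ?_, fun h => by rw [h]; push_cast; ring⟩
  exact_mod_cast mul_left_cancel₀ h2πI (h.trans (mul_comm _ _))

theorem conj_apply (r : ℝ) : (starRingEnd ℂ) (expChar r) = expChar (-r) := by
  rw [apply, apply, ← exp_conj]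
  simp only [map_mul, conj_I, conj_ofReal, map_ofNat, ofReal_neg]
  ring_nf

end expChar

section Lattice

variable {V : Type*} [NormedAddCommGroup V] [InnerProductSpace ℝ V]

def dualLattice (L : AddSubgroup V) : AddSubgroup V where
  carrier := {v | ∀ p ∈ L, ∃ m : ℤ, ⟪v, p⟫ = m}
  zero_mem' _ _ := ⟨0, by simp⟩
  add_mem' {u v} hu hv p hp := by
    obtain ⟨m, hm⟩ := hu p hp
    obtain ⟨n, hn⟩ := hv p hp
    exact ⟨m + n, by rw [inner_add_left, hm, hn]; push_cast; ring⟩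
  neg_mem' {v} hv p hp := by
    obtain ⟨m, hm⟩ := hv p hp
    exact ⟨-m, by rw [inner_neg_left, hm]; push_cast; ring⟩

theorem expChar_inner_eq_of_sub_mem {L : AddSubgroup V} {c : V} (hc : c ∈ dualLattice L)
    {y y' : V} (hy : y - y' ∈ L) : expChar ⟪c, y⟫ = expChar ⟪c, y'⟫ := by
  obtain ⟨m, hm⟩ := hc _ hy
  rw [inner_sub_right, sub_eq_iff_eq_add'] at hm
  rw [hm, expChar.add_intCast]

theorem map_mem_dualLattice {L : AddSubgroup V} (g : V ≃ₗᵢ[ℝ] V) (hL : ∀ p ∈ L, g.symm p ∈ L)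
    {v : V} (hv : v ∈ dualLattice L) : g v ∈ dualLattice L := by
  intro p hp
  rw [LinearIsometryEquiv.inner_map_eq_flip]
  exact hv _ (hL p hp)

end Lattice

theorem sum_eq_zero_of_transversal_of_shift {G R : Type*} [AddCommGroup G] [CommRing R]
    [NoZeroDivisors R] {H : AddSubgroup G} {S : Set (G ⧸ H)} {Y : Finset G}
    (hY : Set.BijOn (fun y => (QuotientAddGroup.mk y : G ⧸ H)) ↑Y S) {t : G}
    (hS : ∀ x ∈ S, x + (t : G ⧸ H) ∈ S)
    {f : G → R} (hf : ∀ g g', g - g' ∈ H → f g = f g') {ζ : R} (hζ : ζ ≠ 1)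
    (hft : ∀ g, f (g + t) = ζ * f g) : ∑ y ∈ Y, f y = 0 := by
  set F : G ⧸ H → R := fun x => f x.out
  have hF : ∀ g : G, F g = f g := fun g =>
    hf _ _ (QuotientAddGroup.eq_iff_sub_mem.mp (QuotientAddGroup.out_eq' (g : G ⧸ H)))
  set T := Y.image ((↑) : G → G ⧸ H)
  have hTS : (T : Set (G ⧸ H)) = S := by rw [coe_image, hY.image_eq]
  have hT : T.map (addRightEmbedding (t : G ⧸ H)) = T := by
    refine map_eq_of_subset fun x hx => ?_
    obtain ⟨x, hxT, rfl⟩ := mem_map.mp hx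
    rw [← mem_coe, hTS] at hxT ⊢
    exact hS x hxT
  have hshift : ∑ x ∈ T, F x = ζ * ∑ x ∈ T, F x := by
    conv_lhs => rw [← hT, sum_map]
    rw [mul_sum]
    refine sum_congr rfl fun x _ => ?_
    induction x using QuotientAddGroup.induction_on with
    | H g => simp only [addRightEmbedding_apply, ← QuotientAddGroup.mk_add, hF, hft]
  have hsum : ∑ y ∈ Y, f y = ∑ x ∈ T, F x := by
    rw [sum_image fun a ha b hb h => hY.injOn ha hb h]
    exact sum_congr rfl fun y _ => (hF y).symm
  rw [hsum]
  have : (ζ - 1) * ∑ x ∈ T, F x = 0 := by rw [sub_mul, one_mul, ← hshift, sub_self]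
  exact (mul_eq_zero.mp this).resolve_left (sub_ne_zero.mpr hζ)

section Grid

variable {V : Type*} [NormedAddCommGroup V] [InnerProductSpace ℝ V]
  {M : ℕ} {Qv Pv : AddSubgroup V} {ρv : V} {Y : Finset V}

-- The grid `(1/M)(ρ∨ + P∨)/Q∨`.
def gridCosets (M : ℕ) (Qv Pv : AddSubgroup V) (ρv : V) : Set (V ⧸ Qv) :=
  {x | ∃ v : V, (M : ℝ) • v - ρv ∈ Pv ∧ QuotientAddGroup.mk v = x}

noncomputable def gridWeight (M : ℕ) (Pv : AddSubgroup V) (ρv c : V) : ℂ :=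
  if ∃ q ∈ dualLattice Pv, c = (M : ℝ) • q then expChar (⟪c, ρv⟫ / M) else 0

theorem sum_grid_of_eq_smul
    (hY : Set.BijOn (fun y => (QuotientAddGroup.mk y : V ⧸ Qv)) ↑Y (gridCosets M Qv Pv ρv))
    (hM : M ≠ 0) {c q : V} (hc : c ∈ dualLattice Qv) (hq : q ∈ dualLattice Pv)
    (hcq : c = (M : ℝ) • q) :
    ∑ y ∈ Y, expChar ⟪c, y⟫ = Y.card * expChar (⟪c, ρv⟫ / M) := by
  rw [← nsmul_eq_mul, ← sum_const]
  refine sum_congr rfl fun y hy => ?_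
  obtain ⟨v, hv, hvy⟩ := hY.mapsTo hy
  rw [expChar_inner_eq_of_sub_mem hc (QuotientAddGroup.eq_iff_sub_mem.mp hvy.symm)]
  obtain ⟨m, hm⟩ := hq _ hv
  have : ⟪c, v⟫ = ⟪c, ρv⟫ / M + m := by
    rw [← hm, hcq, inner_sub_right, real_inner_smul_left, real_inner_smul_left,
      real_inner_smul_right]
    field_simp
    ring
  rw [this, expChar.add_intCast]

theorem sum_grid_of_forall_ne_smul
    (hY : Set.BijOn (fun y => (QuotientAddGroup.mk y : V ⧸ Qv)) ↑Y (gridCosets M Qv Pv ρv))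
    (hM : M ≠ 0) {c : V} (hc : c ∈ dualLattice Qv)
    (hcq : ¬∃ q ∈ dualLattice Pv, c = (M : ℝ) • q) : ∑ y ∈ Y, expChar ⟪c, y⟫ = 0 := by
  have hM' : (M : ℝ) ≠ 0 := Nat.cast_ne_zero.mpr hM
  obtain ⟨p, hp, hcp⟩ : ∃ p ∈ Pv, ∀ m : ℤ, ⟪(M : ℝ)⁻¹ • c, p⟫ ≠ m := by
    by_contra! h
    exact hcq ⟨(M : ℝ)⁻¹ • c, h, (smul_inv_smul₀ hM' c).symm⟩
  refine sum_eq_zero_of_transversal_of_shift hY (t := (M : ℝ)⁻¹ • p) ?_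
    (fun _ _ => expChar_inner_eq_of_sub_mem hc) (ζ := expChar ⟪(M : ℝ)⁻¹ • c, p⟫)
    (fun h => ?_) fun g => ?_
  · rintro _ ⟨v, hv, rfl⟩
    refine ⟨v + (M : ℝ)⁻¹ • p, ?_, rfl⟩
    rw [smul_add, smul_inv_smul₀ hM', add_sub_right_comm]
    exact Pv.add_mem hv hp
  · obtain ⟨n, hn⟩ := expChar.eq_one_iff.mp h
    exact hcp n hn
  · rw [inner_add_right, AddChar.map_add_eq_mul, mul_comm, real_inner_smul_right,
      real_inner_smul_left]

theorem sum_grid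
    (hY : Set.BijOn (fun y => (QuotientAddGroup.mk y : V ⧸ Qv)) ↑Y (gridCosets M Qv Pv ρv))
    (hM : M ≠ 0) {c : V} (hc : c ∈ dualLattice Qv) :
    ∑ y ∈ Y, expChar ⟪c, y⟫ = Y.card * gridWeight M Pv ρv c := by
  unfold gridWeight
  split_ifs with hcq
  · obtain ⟨q, hq, rfl⟩ := hcq
    exact sum_grid_of_eq_smul hY hM hc hq rfl
  · rw [mul_zero, sum_grid_of_forall_ne_smul hY hM hc hcq]

end Grid

theorem intCast_sign_mul_sign_mul {G R : Type*} [Group G] [Ring R] (σ : G →* ℤˣ) (g h : G) :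
    ((σ g : ℤ) : R) * ((σ (g * h) : ℤ) : R) = (σ h : ℤ) := by
  rw [map_mul, Units.val_mul, Int.cast_mul, ← mul_assoc, ← Int.cast_mul, ← Units.val_mul,
    Int.units_mul_self, Units.val_one, Int.cast_one, one_mul]

section Orbit

variable {V : Type*} [NormedAddCommGroup V] [InnerProductSpace ℝ V]
  {W : Subgroup (V ≃ₗᵢ[ℝ] V)}

theorem map_sub_map_mem {L : AddSubgroup V} (hL : ∀ w : W, ∀ x ∈ L, (w : V ≃ₗᵢ[ℝ] V) x ∈ L)
    {ρ : V} (hρ : ∀ w : W, ρ - (w : V ≃ₗᵢ[ℝ] V) ρ ∈ L) {b b' : V} (hb : b - ρ ∈ L)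
    (hb' : b' - ρ ∈ L) (w w' : W) : (w : V ≃ₗᵢ[ℝ] V) b - (w' : V ≃ₗᵢ[ℝ] V) b' ∈ L := by
  have key : (w : V ≃ₗᵢ[ℝ] V) b - (w' : V ≃ₗᵢ[ℝ] V) b' =
      (w : V ≃ₗᵢ[ℝ] V) (b - ρ) - (w' : V ≃ₗᵢ[ℝ] V) (b' - ρ) +
        ((ρ - (w' : V ≃ₗᵢ[ℝ] V) ρ) - (ρ - (w : V ≃ₗᵢ[ℝ] V) ρ)) := by
    simp only [map_sub]; abel
  rw [key]
  exact L.add_mem (L.sub_mem (hL w _ hb) (hL w' _ hb')) (L.sub_mem (hρ w') (hρ w))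

theorem map_mem_dualLattice_iff {L : AddSubgroup V}
    (hL : ∀ w : W, ∀ p ∈ L, (w : V ≃ₗᵢ[ℝ] V) p ∈ L) (w : W) {v : V} :
    (w : V ≃ₗᵢ[ℝ] V) v ∈ dualLattice L ↔ v ∈ dualLattice L := by
  refine ⟨fun h => ?_, map_mem_dualLattice _ (hL w⁻¹)⟩
  simpa using map_mem_dualLattice ((w⁻¹ : W) : V ≃ₗᵢ[ℝ] V) (fun p hp => hL w p hp) h

theorem gridWeight_smul {M : ℕ} (hM : M ≠ 0) {Pv : AddSubgroup V} {ρv q : V}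
    (hq : q ∈ dualLattice Pv) : gridWeight M Pv ρv ((M : ℝ) • q) = expChar ⟪q, ρv⟫ := by
  rw [gridWeight, if_pos ⟨q, hq, rfl⟩, real_inner_smul_left, mul_div_cancel_left₀ _
    (Nat.cast_ne_zero.mpr hM)]

theorem gridWeight_map {M : ℕ} (hM : M ≠ 0) {Pv : AddSubgroup V}
    (hPv : ∀ w : W, ∀ p ∈ Pv, (w : V ≃ₗᵢ[ℝ] V) p ∈ Pv) {ρv : V}
    (hρv : ∀ w : W, ρv - (w : V ≃ₗᵢ[ℝ] V) ρv ∈ Pv) (w : W) (c : V) :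
    gridWeight M Pv ρv ((w : V ≃ₗᵢ[ℝ] V) c) = gridWeight M Pv ρv c := by
  by_cases h : ∃ q ∈ dualLattice Pv, c = (M : ℝ) • q
  · obtain ⟨q, hq, rfl⟩ := h
    rw [map_smul, gridWeight_smul hM ((map_mem_dualLattice_iff hPv w).mpr hq),
      gridWeight_smul hM hq, LinearIsometryEquiv.inner_map_eq_flip]
    obtain ⟨m, hm⟩ := hq _ (hρv w⁻¹)
    rw [inner_sub_right, Subgroup.coe_inv, LinearIsometryEquiv.coe_inv] at hm
    have : ⟪q, (w : V ≃ₗᵢ[ℝ] V).symm ρv⟫ = ⟪q, ρv⟫ + (-m : ℤ) := by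
      push_cast
      linarith
    rw [this, expChar.add_intCast]
  · have hw : ¬∃ q ∈ dualLattice Pv, (w : V ≃ₗᵢ[ℝ] V) c = (M : ℝ) • q := by
      rintro ⟨q, hq, hcq⟩
      refine h ⟨((w⁻¹ : W) : V ≃ₗᵢ[ℝ] V) q, map_mem_dualLattice _ (hPv w) hq, ?_⟩
      simpa using congrArg (w : V ≃ₗᵢ[ℝ] V).symm hcq
    rw [gridWeight, gridWeight, if_neg h, if_neg hw]

theorem sum_sum_sign_mul_sign_mul_map_sub_map [Fintype W] {R : Type*} [CommRing R]
    (σ : W →* ℤˣ) {K : V → R} (hK : ∀ (w : W) c, K ((w : V ≃ₗᵢ[ℝ] V) c) = K c) (b b' : V) :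
    ∑ w : W, ∑ w' : W, ((σ w : ℤ) : R) * ((σ w' : ℤ) : R) *
        K ((w : V ≃ₗᵢ[ℝ] V) b - (w' : V ≃ₗᵢ[ℝ] V) b') =
      Fintype.card W * ∑ u : W, ((σ u : ℤ) : R) * K (b - (u : V ≃ₗᵢ[ℝ] V) b') := by
  rw [← nsmul_eq_mul, ← card_univ, ← sum_const]
  refine sum_congr rfl fun w _ => (Fintype.sum_equiv (Equiv.mulLeft w) _ _ fun u => ?_).symm
  simp only [Equiv.coe_mulLeft, Subgroup.coe_mul, LinearIsometryEquiv.coe_mul,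
    Function.comp_apply, ← map_sub, hK, intCast_sign_mul_sign_mul]

theorem orbitFn_mul_conj [Fintype W] (σ : W →* ℤˣ) (b b' y : V) :
    orbitFn W σ b y * (starRingEnd ℂ) (orbitFn W σ b' y) =
      ∑ w : W, ∑ w' : W, ((σ w : ℤ) : ℂ) * ((σ w' : ℤ) : ℂ) *
        expChar ⟪(w : V ≃ₗᵢ[ℝ] V) b - (w' : V ≃ₗᵢ[ℝ] V) b', y⟫ := by
  simp only [orbitFn, ← expChar.apply, map_sum, map_mul, map_intCast, expChar.conj_apply,
    sum_mul_sum]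
  refine sum_congr rfl fun w _ => sum_congr rfl fun w' _ => ?_
  rw [inner_sub_left, sub_eq_add_neg, AddChar.map_add_eq_mul]
  ring

theorem sum_orbitFn_mul_conj [Fintype W] (σ : W →* ℤˣ) (b b' : V) (Y : Finset V) :
    ∑ y ∈ Y, orbitFn W σ b y * (starRingEnd ℂ) (orbitFn W σ b' y) =
      ∑ w : W, ∑ w' : W, ((σ w : ℤ) : ℂ) * ((σ w' : ℤ) : ℂ) *
        ∑ y ∈ Y, expChar ⟪(w : V ≃ₗᵢ[ℝ] V) b - (w' : V ≃ₗᵢ[ℝ] V) b', y⟫ := by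
  simp only [orbitFn_mul_conj, mul_sum]
  rw [sum_comm]
  exact sum_congr rfl fun w _ => sum_comm

end Orbit

theorem stmt_16_general {V : Type*} [NormedAddCommGroup V] [InnerProductSpace ℝ V]
    (W : Subgroup (V ≃ₗᵢ[ℝ] V)) [Fintype W] (σ : W →* ℤˣ) (M : ℕ) (hM : 1 ≤ M)
    (Qv Pv : AddSubgroup V)
    (hQvW : ∀ w : W, ∀ q ∈ Qv, (w : V ≃ₗᵢ[ℝ] V) q ∈ Qv)
    (hPvW : ∀ w : W, ∀ p ∈ Pv, (w : V ≃ₗᵢ[ℝ] V) p ∈ Pv)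
    (P : AddSubgroup V) (hdual : ∀ l ∈ P, ∀ q ∈ Qv, ∃ m : ℤ, (inner ℝ l q : ℝ) = m)
    (Q : Set V) (hQ : Q = {v : V | ∀ p ∈ Pv, ∃ m : ℤ, (inner ℝ v p : ℝ) = m})
    (ρ : V) (hρ : ∀ w : W, ρ - (w : V ≃ₗᵢ[ℝ] V) ρ ∈ P)
    (ρv : V) (hρv : ∀ w : W, ρv - (w : V ≃ₗᵢ[ℝ] V) ρv ∈ Pv)
    (b b' : V) (hb : b - ρ ∈ P) (hb' : b' - ρ ∈ P)
    (Y : Finset V)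
    (hY : Set.BijOn (fun y => (QuotientAddGroup.mk y : V ⧸ Qv)) ↑Y
      {x : V ⧸ Qv | ∃ v : V, (M : ℝ) • v - ρv ∈ Pv ∧ QuotientAddGroup.mk v = x}) :
    ∑ y ∈ Y, orbitFn W σ b y * (starRingEnd ℂ) (orbitFn W σ b' y) =
      (Fintype.card W : ℂ) * (Y.card : ℂ) *
        ∑ w : W,
          if ∃ q ∈ Q, b - (w : V ≃ₗᵢ[ℝ] V) b' = (M : ℝ) • q then
            ((σ w : ℤ) : ℂ) * Complex.exp (2 * Real.pi * Complex.I *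
              (((inner ℝ (b - (w : V ≃ₗᵢ[ℝ] V) b') ρv : ℝ) / (M : ℝ) : ℝ) : ℂ))
          else 0 := by
  have hM₀ : M ≠ 0 := Nat.one_le_iff_ne_zero.mp hM
  have hP : P ≤ dualLattice Qv := hdual
  have hdiff (w w' : W) : (w : V ≃ₗᵢ[ℝ] V) b - (w' : V ≃ₗᵢ[ℝ] V) b' ∈ dualLattice Qv :=
    map_sub_map_mem (fun w _ hx => (map_mem_dualLattice_iff hQvW w).mpr hx)
      (fun w => hP (hρ w)) (hP hb) (hP hb') w w'
  replace hQ : Q = dualLattice Pv := hQ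
  subst hQ
  calc _ = ∑ w : W, ∑ w' : W, ((σ w : ℤ) : ℂ) * ((σ w' : ℤ) : ℂ) *
        (Y.card * gridWeight M Pv ρv ((w : V ≃ₗᵢ[ℝ] V) b - (w' : V ≃ₗᵢ[ℝ] V) b')) := by
        rw [sum_orbitFn_mul_conj]
        exact sum_congr rfl fun w _ => sum_congr rfl fun w' _ => by
          rw [sum_grid hY hM₀ (hdiff w w')]
    _ = Fintype.card W * ∑ u : W, ((σ u : ℤ) : ℂ) *
        (Y.card * gridWeight M Pv ρv (b - (u : V ≃ₗᵢ[ℝ] V) b')) :=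
      sum_sum_sign_mul_sign_mul_map_sub_map σ (K := fun c => Y.card * gridWeight M Pv ρv c)
        (fun w c => by rw [gridWeight_map hM₀ hPvW hρv]) b b'
    _ = _ := by
      simp only [SetLike.mem_coe, gridWeight, expChar.apply, mul_ite, mul_zero, mul_sum]
      refine sum_congr rfl fun u _ => ?_
      split_ifs <;> ring

/-- the central identity in the proof of discrete orthogonality of orbit
functions: with `Q∨ ⊆ P∨` `W`-invariant lattices, `P` ℤ-dual to `Q∨`,
`Q = {v | ⟪v, p⟫ ∈ ℤ ∀ p ∈ P∨}`, admissible shifts `ρ`, `ρ∨`, labels `b, b' ∈ ρ + P`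
and `Y` a transversal of the shifted grid `(1/M)(ρ∨ + P∨)/Q∨`, one has
`Σ_{y ∈ Y} φ^σ_b(y) conj(φ^σ_{b'}(y))
  = |W|·|Y|·Σ_{w ∈ W, b - w b' ∈ MQ} σ(w) exp(2πi⟪b - w b', ρ∨⟫/M)`. -/
theorem stmt_16 {V : Type*} [NormedAddCommGroup V] [InnerProductSpace ℝ V]
    [FiniteDimensional ℝ V]
    (W : Subgroup (V ≃ₗᵢ[ℝ] V)) [Fintype W] (σ : W →* ℤˣ) (M : ℕ) (hM : 1 ≤ M)
    (Qv Pv : AddSubgroup V) (hQvPv : Qv ≤ Pv)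
    (hQvW : ∀ w : W, ∀ q ∈ Qv, (w : V ≃ₗᵢ[ℝ] V) q ∈ Qv)
    (hPvW : ∀ w : W, ∀ p ∈ Pv, (w : V ≃ₗᵢ[ℝ] V) p ∈ Pv)
    (P : AddSubgroup V) (hdual : ∀ l ∈ P, ∀ q ∈ Qv, ∃ m : ℤ, (inner ℝ l q : ℝ) = m)
    (Q : Set V) (hQ : Q = {v : V | ∀ p ∈ Pv, ∃ m : ℤ, (inner ℝ v p : ℝ) = m})
    (ρ : V) (hρ : ∀ w : W, ρ - (w : V ≃ₗᵢ[ℝ] V) ρ ∈ P)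
    (ρv : V) (hρv : ∀ w : W, ρv - (w : V ≃ₗᵢ[ℝ] V) ρv ∈ Pv)
    (b b' : V) (hb : b - ρ ∈ P) (hb' : b' - ρ ∈ P)
    (Y : Finset V)
    (hY : Set.BijOn (fun y => (QuotientAddGroup.mk y : V ⧸ Qv)) ↑Y
      {x : V ⧸ Qv | ∃ v : V, (M : ℝ) • v - ρv ∈ Pv ∧ QuotientAddGroup.mk v = x}) :
    ∑ y ∈ Y, orbitFn W σ b y * (starRingEnd ℂ) (orbitFn W σ b' y) =
      (Fintype.card W : ℂ) * (Y.card : ℂ) *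
        ∑ w : W,
          if ∃ q ∈ Q, b - (w : V ≃ₗᵢ[ℝ] V) b' = (M : ℝ) • q then
            ((σ w : ℤ) : ℂ) * Complex.exp (2 * Real.pi * Complex.I *
              (((inner ℝ (b - (w : V ≃ₗᵢ[ℝ] V) b') ρv : ℝ) / (M : ℝ) : ℝ) : ℂ))
          else 0 :=
  stmt_16_general W σ M hM Qv Pv hQvW hPvW P hdual Q hQ ρ hρ ρv hρv b b' hb hb' Y hY
end
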